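/- arXiv:2409.03506 — 3 statements merged into one kernel-verified Lean document; each statement's English description precedes it below -/
import Mathlib

section
/- Contraction property: let C₁ = 4·max{‖P₀'‖_∞, ‖Q₀'‖_∞, (2/(a₀ℓ))‖ω_B'‖_∞} and C₂ = (C₁ℓ/(2η))‖ΔW'‖_∞ + k/η. Then for T = 1/(2C₂), the map ψ sending x ∈ C⁰([0,T]) with x(0)=0 to ψ[x](t) = ∫₀ᵗ F[x](s) ds satisfies ‖ψ[x₁] − ψ[x₂]‖_∞ ≤ (1/2)‖x₁ − x₂‖_∞ for all such x₁, x₂; in particular ψ has a unique fixed point in this set. -/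
open Real Set

/-- The explicit integral formula `P_x` for the density of the bottom motor row. -/
noncomputable def Pint (ℓ a₀ : ℝ) (ωB P₀ : ℝ → ℝ) (x : ℝ → ℝ) (ξ t : ℝ) : ℝ :=
  Real.exp (-a₀ * t) * P₀ (ξ - x t)
    + (Real.exp (-a₀ * t) / ℓ) * ∫ s in (0 : ℝ)..t, Real.exp (a₀ * s) * ωB (ξ + x s - x t)

/-- The explicit integral formula `Q_x` for the density of the top motor row. -/
noncomputable def Qint (ℓ a₀ : ℝ) (ωB Q₀ : ℝ → ℝ) (x : ℝ → ℝ) (ξ t : ℝ) : ℝ :=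
  Real.exp (-a₀ * t) * Q₀ (ξ + x t)
    + (Real.exp (-a₀ * t) / ℓ) * ∫ s in (0 : ℝ)..t, Real.exp (a₀ * s) * ωB (ξ - x s + x t)

/-- The velocity functional `F[x]`. -/
noncomputable def Fint (ℓ k η a₀ : ℝ) (ωB ΔW P₀ Q₀ : ℝ → ℝ) (x : ℝ → ℝ) (s : ℝ) : ℝ :=
  (1 / (2 * η)) *
      (∫ ξ in (0 : ℝ)..ℓ, (Pint ℓ a₀ ωB P₀ x ξ s - Qint ℓ a₀ ωB Q₀ x ξ s) * deriv ΔW ξ)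
    - (k / η) * x s

/-- The Picard map `ψ[x](t) = ∫₀ᵗ F[x](s) ds`. -/
noncomputable def psiMap (ℓ k η a₀ : ℝ) (ωB ΔW P₀ Q₀ : ℝ → ℝ) (x : ℝ → ℝ) (t : ℝ) : ℝ :=
  ∫ s in (0 : ℝ)..t, Fint ℓ k η a₀ ωB ΔW P₀ Q₀ x s

open MeasureTheory

/-!
The densities `P_x`, `Q_x` are Lipschitz in the trajectory `x`: the transported initial data through
the derivative bounds of the periodic `P₀`, `Q₀`, and the memory term through that of `ω_B` together
with `e^{-a₀ s} ∫₀ˢ e^{a₀ u} du ≤ 1/a₀`. So moving `x` by at most `D` on `[0, s]` moves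
`P_x - Q_x` by at most `C₁ D`, the velocity `F[x](s)` by at most `C₂ D`, and `ψ[x](t)` by at most
`C₂ t D ≤ D / 2` for `t ≤ T`. Since `ψ[x]` on `[0, T]` only depends on `x` on `[0, T]`, this
transfers to functions merely continuous on `[0, T]`, and Banach's fixed point theorem on
`C([0, T], ℝ)` gives the fixed point.
-/

-- The paper's `‖f'‖_∞`: for `ℓ`-periodic `f` the supremum over one period is the global one.
noncomputable def derivSupNorm (ℓ : ℝ) (f : ℝ → ℝ) : ℝ := ⨆ ξ : Icc (0 : ℝ) ℓ, |deriv f ξ.1|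

lemma derivSupNorm_nonneg (ℓ : ℝ) (f : ℝ → ℝ) : 0 ≤ derivSupNorm ℓ f :=
  Real.iSup_nonneg fun _ => abs_nonneg _

lemma abs_le_iSup_Icc {a b y : ℝ} {g : ℝ → ℝ} (hg : ContinuousOn g (Icc a b)) (hy : y ∈ Icc a b) :
    |g y| ≤ ⨆ ξ : Icc a b, |g ξ.1| := by
  refine le_ciSup (f := fun ξ : Icc a b => |g ξ.1|) ?_ ⟨y, hy⟩
  have h := isCompact_Icc.bddAbove_image hg.abs
  rwa [image_eq_range] at h

lemma Function.Periodic.deriv {f : ℝ → ℝ} {c : ℝ} (hf : f.Periodic c) :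
    (_root_.deriv f).Periodic c := by
  intro x
  rw [← deriv_comp_add_const, show (fun y => f (y + c)) = f from funext hf]

lemma abs_deriv_le_derivSupNorm {f : ℝ → ℝ} {c : ℝ} (hc : 0 < c)
    (hf : Continuous (deriv f)) (hper : f.Periodic c) (y : ℝ) :
    |deriv f y| ≤ derivSupNorm c f := by
  obtain ⟨z, hz, hzy⟩ := hper.deriv.exists_mem_Ico₀ hc y
  rw [hzy]
  exact abs_le_iSup_Icc hf.continuousOn (Ico_subset_Icc_self hz)

lemma abs_sub_le_derivSupNorm_mul {f : ℝ → ℝ} {c : ℝ} (hc : 0 < c)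
    (hf : ContDiff ℝ 1 f) (hper : f.Periodic c) (y z : ℝ) :
    |f y - f z| ≤ derivSupNorm c f * |y - z| := by
  simpa only [Real.norm_eq_abs] using
    Convex.norm_image_sub_le_of_norm_deriv_le (s := univ) (f := f)
      (fun w _ => hf.differentiable one_ne_zero w)
    (fun w _ => abs_deriv_le_derivSupNorm hc (hf.continuous_deriv le_rfl) hper w)
    convex_univ (mem_univ z) (mem_univ y)

lemma integral_exp_mul {a s : ℝ} (ha : a ≠ 0) :
    ∫ u in (0 : ℝ)..s, exp (a * u) = (exp (a * s) - 1) / a := by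
  rw [intervalIntegral.integral_comp_mul_left (f := exp) ha]
  simp [integral_exp, div_eq_inv_mul]

lemma exp_neg_mul_abs_integral_exp_mul_sub_le {a s B : ℝ} (ha : 0 < a) (hs : 0 ≤ s)
    {f₁ f₂ : ℝ → ℝ} (hf₁ : Continuous f₁) (hf₂ : Continuous f₂)
    (hB : ∀ u ∈ Icc 0 s, |f₁ u - f₂ u| ≤ B) :
    exp (-a * s) *
        |(∫ u in (0 : ℝ)..s, exp (a * u) * f₁ u) - ∫ u in (0 : ℝ)..s, exp (a * u) * f₂ u|
      ≤ B / a := by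
  have hB0 : 0 ≤ B := (abs_nonneg _).trans (hB 0 ⟨le_rfl, hs⟩)
  have hint : ∀ f : ℝ → ℝ, Continuous f →
      IntervalIntegrable (fun u => exp (a * u) * f u) volume 0 s :=
    fun f hf => (by fun_prop : Continuous fun u => exp (a * u) * f u).intervalIntegrable _ _
  have hbound : |∫ u in (0 : ℝ)..s, (exp (a * u) * f₁ u - exp (a * u) * f₂ u)|
      ≤ ∫ u in (0 : ℝ)..s, exp (a * u) * B := by
    rw [← Real.norm_eq_abs]
    refine intervalIntegral.norm_integral_le_of_norm_le hs (Filter.Eventually.of_forall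
      fun u hu => ?_) ((hint _ continuous_const))
    rw [Real.norm_eq_abs, ← mul_sub, abs_mul, abs_exp]
    exact mul_le_mul_of_nonneg_left (hB u (Ioc_subset_Icc_self hu)) (exp_pos _).le
  rw [← intervalIntegral.integral_sub (hint _ hf₁) (hint _ hf₂)]
  rw [intervalIntegral.integral_mul_const, integral_exp_mul ha.ne'] at hbound
  have hexp : exp (-a * s) * exp (a * s) = 1 := by rw [← exp_add]; simp
  calc exp (-a * s) * |∫ u in (0 : ℝ)..s, (exp (a * u) * f₁ u - exp (a * u) * f₂ u)|
      ≤ exp (-a * s) * ((exp (a * s) - 1) / a * B) := by gcongr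
    _ = (exp (-a * s) * exp (a * s) - exp (-a * s)) * B / a := by ring
    _ ≤ B / a := by
      rw [hexp]
      exact div_le_div_of_nonneg_right (by nlinarith [exp_pos (-a * s)]) ha.le

lemma ContinuousOn.exists_continuous_eqOn_Icc {a b : ℝ} (hab : a ≤ b) {x : ℝ → ℝ}
    (hx : ContinuousOn x (Icc a b)) : ∃ y : ℝ → ℝ, Continuous y ∧ EqOn y x (Icc a b) :=
  ⟨IccExtend hab ((Icc a b).domRestrict x), hx.domRestrict.Icc_extend',
    fun _ hu => IccExtend_of_mem hab _ hu⟩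

def ContractsOnIcc (T K : ℝ) (Φ : (ℝ → ℝ) → ℝ → ℝ) : Prop :=
  ∀ x y, Continuous x → Continuous y → ∀ D, (∀ u ∈ Icc 0 T, |x u - y u| ≤ D) →
    ∀ t ∈ Icc 0 T, |Φ x t - Φ y t| ≤ K * D

section LocalContraction

variable {T K : ℝ} {Φ : (ℝ → ℝ) → ℝ → ℝ}

lemma abs_sub_le_mul_iSup_Icc_of_local
    (hloc : ∀ x y, EqOn x y (Icc 0 T) → EqOn (Φ x) (Φ y) (Icc 0 T))
    (hcontr : ContractsOnIcc T K Φ)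
    {x y : ℝ → ℝ} (hx : ContinuousOn x (Icc 0 T)) (hy : ContinuousOn y (Icc 0 T))
    {t : ℝ} (ht : t ∈ Icc 0 T) :
    |Φ x t - Φ y t| ≤ K * ⨆ s : Icc (0 : ℝ) T, |x s.1 - y s.1| := by
  have hT : 0 ≤ T := ht.1.trans ht.2
  obtain ⟨x', hx'c, hx'⟩ := hx.exists_continuous_eqOn_Icc hT
  obtain ⟨y', hy'c, hy'⟩ := hy.exists_continuous_eqOn_Icc hT
  rw [← hloc x' x hx' ht, ← hloc y' y hy' ht]
  refine hcontr x' y' hx'c hy'c _ (fun u hu => ?_) t ht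
  rw [hx' hu, hy' hu]
  exact abs_le_iSup_Icc (g := fun u => x u - y u) (hx.sub hy) hu

lemma exists_fixedPoint_Icc_of_contractsOnIcc (hT : 0 ≤ T) (hK : K < 1)
    (hcont : ∀ x, Continuous x → Continuous (Φ x))
    (hcontr : ContractsOnIcc T K Φ) :
    ∃ x, ContinuousOn x (Icc 0 T) ∧ ∀ t ∈ Icc 0 T, x t = Φ x t := by
  let ext : C(Icc 0 T, ℝ) → ℝ → ℝ := fun f => IccExtend hT f
  have hext : ∀ f, Continuous (ext f) := fun f => f.continuous.Icc_extend'
  let Ψ : C(Icc 0 T, ℝ) → C(Icc 0 T, ℝ) := fun f =>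
    ⟨fun t => Φ (ext f) t, (hcont _ (hext f)).comp continuous_subtype_val⟩
  have hΨ : ContractingWith K.toNNReal Ψ := by
    refine ⟨Real.toNNReal_lt_one.2 hK, LipschitzWith.of_dist_le_mul fun f g => ?_⟩
    refine (ContinuousMap.dist_le (by positivity)).2 fun t => ?_
    refine (hcontr _ _ (hext f) (hext g) (dist f g) (fun u hu => ?_) t t.2).trans
      (mul_le_mul_of_nonneg_right (Real.le_coe_toNNReal K) dist_nonneg)
    simpa only [ext, IccExtend_of_mem hT _ hu, ← Real.dist_eq] using
      ContinuousMap.dist_apply_le_dist (f := f) (g := g) ⟨u, hu⟩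
  refine ⟨ext (hΨ.fixedPoint Ψ), (hext _).continuousOn, fun t ht => ?_⟩
  conv_lhs => rw [← hΨ.fixedPoint_isFixedPt]
  simp only [ext, IccExtend_of_mem hT _ ht]
  rfl

lemma eqOn_Icc_of_fixedPoint_of_local (hK : K < 1)
    (hloc : ∀ x y, EqOn x y (Icc 0 T) → EqOn (Φ x) (Φ y) (Icc 0 T))
    (hcontr : ContractsOnIcc T K Φ)
    {x y : ℝ → ℝ} (hx : ContinuousOn x (Icc 0 T)) (hy : ContinuousOn y (Icc 0 T))
    (hxΦ : ∀ t ∈ Icc 0 T, x t = Φ x t) (hyΦ : ∀ t ∈ Icc 0 T, y t = Φ y t) :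
    EqOn x y (Icc 0 T) := by
  intro t ht
  have : Nonempty (Icc (0 : ℝ) T) := ⟨⟨t, ht⟩⟩
  set D := ⨆ s : Icc (0 : ℝ) T, |x s.1 - y s.1|
  have hle : ∀ u ∈ Icc 0 T, |x u - y u| ≤ K * D := fun u hu => by
    rw [hxΦ u hu, hyΦ u hu]
    exact abs_sub_le_mul_iSup_Icc_of_local hloc hcontr hx hy hu
  have hD : D = 0 := by
    have hD0 : 0 ≤ D := Real.iSup_nonneg fun _ => abs_nonneg _
    have hDK : D ≤ K * D := ciSup_le fun s => hle s.1 s.2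
    nlinarith
  have := hle t ht
  rw [hD, mul_zero] at this
  exact sub_eq_zero.1 (abs_nonpos_iff.1 this)

end LocalContraction

lemma abs_decay_add_memory_sub_le {ℓ a s A B g₁ g₂ : ℝ} (hℓ : 0 < ℓ) (ha : 0 < a) (hs : 0 ≤ s)
    {f₁ f₂ : ℝ → ℝ} (hf₁ : Continuous f₁) (hf₂ : Continuous f₂) (hg : |g₁ - g₂| ≤ A)
    (hf : ∀ u ∈ Icc 0 s, |f₁ u - f₂ u| ≤ B) :
    |(exp (-a * s) * g₁ + exp (-a * s) / ℓ * ∫ u in (0 : ℝ)..s, exp (a * u) * f₁ u)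
      - (exp (-a * s) * g₂ + exp (-a * s) / ℓ * ∫ u in (0 : ℝ)..s, exp (a * u) * f₂ u)|
      ≤ A + B / (a * ℓ) := by
  set I₁ := ∫ u in (0 : ℝ)..s, exp (a * u) * f₁ u
  set I₂ := ∫ u in (0 : ℝ)..s, exp (a * u) * f₂ u
  have hmem := exp_neg_mul_abs_integral_exp_mul_sub_le ha hs hf₁ hf₂ hf
  have hexp : exp (-a * s) ≤ 1 := exp_le_one_iff.2 (by nlinarith)
  calc |(exp (-a * s) * g₁ + exp (-a * s) / ℓ * I₁) - (exp (-a * s) * g₂ + exp (-a * s) / ℓ * I₂)|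
      = |exp (-a * s) * (g₁ - g₂) + (exp (-a * s) * (I₁ - I₂)) / ℓ| := by ring_nf
    _ ≤ exp (-a * s) * |g₁ - g₂| + exp (-a * s) * |I₁ - I₂| / ℓ := by
      refine (abs_add_le _ _).trans_eq ?_
      rw [abs_div, abs_mul, abs_mul, abs_of_pos (exp_pos _), abs_of_pos hℓ]
    _ ≤ 1 * A + B / a / ℓ := by
      gcongr
    _ = A + B / (a * ℓ) := by rw [one_mul, div_div]

section DensityEstimates

variable {ℓ a₀ : ℝ} {ωB P₀ Q₀ : ℝ → ℝ} {x₁ x₂ : ℝ → ℝ} {s D : ℝ}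

lemma abs_Pint_sub_le (hℓ : 0 < ℓ) (ha₀ : 0 < a₀)
    (hωB : ContDiff ℝ 1 ωB) (hωBper : ωB.Periodic ℓ)
    (hP₀ : ContDiff ℝ 1 P₀) (hP₀per : P₀.Periodic ℓ)
    (hx₁ : Continuous x₁) (hx₂ : Continuous x₂) (hs : 0 ≤ s)
    (hb : ∀ u ∈ Icc 0 s, |x₁ u - x₂ u| ≤ D) (ξ : ℝ) :
    |Pint ℓ a₀ ωB P₀ x₁ ξ s - Pint ℓ a₀ ωB P₀ x₂ ξ s|
      ≤ derivSupNorm ℓ P₀ * D + 2 * derivSupNorm ℓ ωB * D / (a₀ * ℓ) := by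
  have hω := hωB.continuous
  refine abs_decay_add_memory_sub_le hℓ ha₀ hs (f₁ := fun u => ωB (ξ + x₁ u - x₁ s))
    (f₂ := fun u => ωB (ξ + x₂ u - x₂ s)) (by fun_prop) (by fun_prop) ?_ fun u hu => ?_
  · calc |P₀ (ξ - x₁ s) - P₀ (ξ - x₂ s)|
        ≤ derivSupNorm ℓ P₀ * |(ξ - x₁ s) - (ξ - x₂ s)| :=
          abs_sub_le_derivSupNorm_mul hℓ hP₀ hP₀per _ _
      _ ≤ derivSupNorm ℓ P₀ * D := by
          gcongr
          · exact derivSupNorm_nonneg ℓ P₀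
          · rw [show (ξ - x₁ s) - (ξ - x₂ s) = -(x₁ s - x₂ s) by ring, abs_neg]
            exact hb s ⟨hs, le_rfl⟩
  · calc |ωB (ξ + x₁ u - x₁ s) - ωB (ξ + x₂ u - x₂ s)|
        ≤ derivSupNorm ℓ ωB * |(x₁ u - x₂ u) - (x₁ s - x₂ s)| := by
          simpa only [show ∀ y z w v : ℝ, ξ + y - z - (ξ + w - v) = (y - w) - (z - v) by
            intros; ring] using abs_sub_le_derivSupNorm_mul hℓ hωB hωBper
              (ξ + x₁ u - x₁ s) (ξ + x₂ u - x₂ s)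
      _ ≤ derivSupNorm ℓ ωB * (D + D) := by
          gcongr
          · exact derivSupNorm_nonneg ℓ ωB
          · exact (abs_sub _ _).trans (add_le_add (hb u hu) (hb s ⟨hs, le_rfl⟩))
      _ = 2 * derivSupNorm ℓ ωB * D := by ring

lemma abs_Qint_sub_le (hℓ : 0 < ℓ) (ha₀ : 0 < a₀)
    (hωB : ContDiff ℝ 1 ωB) (hωBper : ωB.Periodic ℓ)
    (hQ₀ : ContDiff ℝ 1 Q₀) (hQ₀per : Q₀.Periodic ℓ)
    (hx₁ : Continuous x₁) (hx₂ : Continuous x₂) (hs : 0 ≤ s)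
    (hb : ∀ u ∈ Icc 0 s, |x₁ u - x₂ u| ≤ D) (ξ : ℝ) :
    |Qint ℓ a₀ ωB Q₀ x₁ ξ s - Qint ℓ a₀ ωB Q₀ x₂ ξ s|
      ≤ derivSupNorm ℓ Q₀ * D + 2 * derivSupNorm ℓ ωB * D / (a₀ * ℓ) := by
  have hω := hωB.continuous
  refine abs_decay_add_memory_sub_le hℓ ha₀ hs (f₁ := fun u => ωB (ξ - x₁ u + x₁ s))
    (f₂ := fun u => ωB (ξ - x₂ u + x₂ s)) (by fun_prop) (by fun_prop) ?_ fun u hu => ?_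
  · calc |Q₀ (ξ + x₁ s) - Q₀ (ξ + x₂ s)|
        ≤ derivSupNorm ℓ Q₀ * |(ξ + x₁ s) - (ξ + x₂ s)| :=
          abs_sub_le_derivSupNorm_mul hℓ hQ₀ hQ₀per _ _
      _ ≤ derivSupNorm ℓ Q₀ * D := by
          gcongr
          · exact derivSupNorm_nonneg ℓ Q₀
          · rw [add_sub_add_left_eq_sub]
            exact hb s ⟨hs, le_rfl⟩
  · calc |ωB (ξ - x₁ u + x₁ s) - ωB (ξ - x₂ u + x₂ s)|
        ≤ derivSupNorm ℓ ωB * |(x₁ s - x₂ s) - (x₁ u - x₂ u)| := by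
          simpa only [show ∀ y z w v : ℝ, ξ - y + z - (ξ - w + v) = (z - v) - (y - w) by
            intros; ring] using abs_sub_le_derivSupNorm_mul hℓ hωB hωBper
              (ξ - x₁ u + x₁ s) (ξ - x₂ u + x₂ s)
      _ ≤ derivSupNorm ℓ ωB * (D + D) := by
          gcongr
          · exact derivSupNorm_nonneg ℓ ωB
          · exact (abs_sub _ _).trans (add_le_add (hb s ⟨hs, le_rfl⟩) (hb u hu))
      _ = 2 * derivSupNorm ℓ ωB * D := by ring

lemma abs_Pint_sub_Qint_sub_le (hℓ : 0 < ℓ) (ha₀ : 0 < a₀)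
    (hωB : ContDiff ℝ 1 ωB) (hωBper : ωB.Periodic ℓ)
    (hP₀ : ContDiff ℝ 1 P₀) (hP₀per : P₀.Periodic ℓ)
    (hQ₀ : ContDiff ℝ 1 Q₀) (hQ₀per : Q₀.Periodic ℓ)
    (hx₁ : Continuous x₁) (hx₂ : Continuous x₂) (hs : 0 ≤ s)
    (hb : ∀ u ∈ Icc 0 s, |x₁ u - x₂ u| ≤ D) (ξ : ℝ) :
    |(Pint ℓ a₀ ωB P₀ x₁ ξ s - Qint ℓ a₀ ωB Q₀ x₁ ξ s)
        - (Pint ℓ a₀ ωB P₀ x₂ ξ s - Qint ℓ a₀ ωB Q₀ x₂ ξ s)|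
      ≤ 4 * max (derivSupNorm ℓ P₀)
          (max (derivSupNorm ℓ Q₀) (2 / (a₀ * ℓ) * derivSupNorm ℓ ωB)) * D := by
  set m := max (derivSupNorm ℓ P₀) (max (derivSupNorm ℓ Q₀) (2 / (a₀ * ℓ) * derivSupNorm ℓ ωB))
  have hD : 0 ≤ D := (abs_nonneg _).trans (hb 0 ⟨le_rfl, hs⟩)
  have hPm : derivSupNorm ℓ P₀ ≤ m := le_max_left _ _
  have hQm : derivSupNorm ℓ Q₀ ≤ m := (le_max_left _ _).trans (le_max_right _ _)
  have hωm : 2 / (a₀ * ℓ) * derivSupNorm ℓ ωB ≤ m := (le_max_right _ _).trans (le_max_right _ _)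
  have hP := abs_Pint_sub_le hℓ ha₀ hωB hωBper hP₀ hP₀per hx₁ hx₂ hs hb ξ
  have hQ := abs_Qint_sub_le hℓ ha₀ hωB hωBper hQ₀ hQ₀per hx₁ hx₂ hs hb ξ
  rw [sub_sub_sub_comm]
  calc _ ≤ |Pint ℓ a₀ ωB P₀ x₁ ξ s - Pint ℓ a₀ ωB P₀ x₂ ξ s|
        + |Qint ℓ a₀ ωB Q₀ x₁ ξ s - Qint ℓ a₀ ωB Q₀ x₂ ξ s| := abs_sub _ _
    _ ≤ (derivSupNorm ℓ P₀ + derivSupNorm ℓ Q₀ + 2 * (2 / (a₀ * ℓ) * derivSupNorm ℓ ωB)) * D := by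
      have : 2 * derivSupNorm ℓ ωB * D / (a₀ * ℓ) = 2 / (a₀ * ℓ) * derivSupNorm ℓ ωB * D := by
        ring
      linarith
    _ ≤ 4 * m * D := by gcongr; linarith

end DensityEstimates

section Continuity
variable {ℓ a₀ : ℝ} {ωB P₀ Q₀ x : ℝ → ℝ}

lemma continuous_Pint (hωB : Continuous ωB) (hP₀ : Continuous P₀) (hx : Continuous x) :
    Continuous fun p : ℝ × ℝ => Pint ℓ a₀ ωB P₀ x p.1 p.2 := by
  unfold Pint
  refine Continuous.add (by fun_prop) (Continuous.mul (by fun_prop) ?_)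
  exact intervalIntegral.continuous_parametric_intervalIntegral_of_continuous
    (f := fun (p : ℝ × ℝ) u => exp (a₀ * u) * ωB (p.1 + x u - x p.2)) (by fun_prop) continuous_snd

lemma continuous_Qint (hωB : Continuous ωB) (hQ₀ : Continuous Q₀) (hx : Continuous x) :
    Continuous fun p : ℝ × ℝ => Qint ℓ a₀ ωB Q₀ x p.1 p.2 := by
  unfold Qint
  refine Continuous.add (by fun_prop) (Continuous.mul (by fun_prop) ?_)
  exact intervalIntegral.continuous_parametric_intervalIntegral_of_continuous
    (f := fun (p : ℝ × ℝ) u => exp (a₀ * u) * ωB (p.1 - x u + x p.2)) (by fun_prop) continuous_snd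

end Continuity

section Velocity
variable {ℓ k η a₀ : ℝ} {ωB ΔW P₀ Q₀ : ℝ → ℝ}

lemma continuous_Fint (hωB : Continuous ωB) (hΔW : Continuous (deriv ΔW))
    (hP₀ : Continuous P₀) (hQ₀ : Continuous Q₀) {x : ℝ → ℝ} (hx : Continuous x) :
    Continuous (Fint ℓ k η a₀ ωB ΔW P₀ Q₀ x) := by
  have hP := continuous_Pint (ℓ := ℓ) (a₀ := a₀) hωB hP₀ hx
  have hQ := continuous_Qint (ℓ := ℓ) (a₀ := a₀) hωB hQ₀ hx
  unfold Fint
  refine Continuous.sub (continuous_const.mul ?_) (by fun_prop)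
  exact intervalIntegral.continuous_parametric_intervalIntegral_of_continuous'
    (f := fun s ξ => (Pint ℓ a₀ ωB P₀ x ξ s - Qint ℓ a₀ ωB Q₀ x ξ s) * deriv ΔW ξ)
    (((hP.comp continuous_swap).sub (hQ.comp continuous_swap)).mul (hΔW.comp continuous_snd)) _ _

lemma continuous_psiMap (hωB : Continuous ωB) (hΔW : Continuous (deriv ΔW))
    (hP₀ : Continuous P₀) (hQ₀ : Continuous Q₀) {x : ℝ → ℝ} (hx : Continuous x) :
    Continuous (psiMap ℓ k η a₀ ωB ΔW P₀ Q₀ x) :=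
  intervalIntegral.continuous_primitive
    (fun _ _ => (continuous_Fint hωB hΔW hP₀ hQ₀ hx).intervalIntegrable _ _) 0

lemma Pint_congr {x y : ℝ → ℝ} {t : ℝ} (ht : 0 ≤ t) (h : EqOn x y (Icc 0 t)) (ξ : ℝ) :
    Pint ℓ a₀ ωB P₀ x ξ t = Pint ℓ a₀ ωB P₀ y ξ t := by
  have hI : ∫ s in (0 : ℝ)..t, exp (a₀ * s) * ωB (ξ + x s - x t)
      = ∫ s in (0 : ℝ)..t, exp (a₀ * s) * ωB (ξ + y s - y t) :=
    intervalIntegral.integral_congr fun s hs => by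
      rw [uIcc_of_le ht] at hs
      simp only [h hs, h (right_mem_Icc.2 ht)]
  unfold Pint
  rw [hI, h (right_mem_Icc.2 ht)]

lemma Qint_congr {x y : ℝ → ℝ} {t : ℝ} (ht : 0 ≤ t) (h : EqOn x y (Icc 0 t)) (ξ : ℝ) :
    Qint ℓ a₀ ωB Q₀ x ξ t = Qint ℓ a₀ ωB Q₀ y ξ t := by
  have hI : ∫ s in (0 : ℝ)..t, exp (a₀ * s) * ωB (ξ - x s + x t)
      = ∫ s in (0 : ℝ)..t, exp (a₀ * s) * ωB (ξ - y s + y t) :=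
    intervalIntegral.integral_congr fun s hs => by
      rw [uIcc_of_le ht] at hs
      simp only [h hs, h (right_mem_Icc.2 ht)]
  unfold Qint
  rw [hI, h (right_mem_Icc.2 ht)]

lemma psiMap_eqOn {x y : ℝ → ℝ} {T : ℝ} (h : EqOn x y (Icc 0 T)) :
    EqOn (psiMap ℓ k η a₀ ωB ΔW P₀ Q₀ x) (psiMap ℓ k η a₀ ωB ΔW P₀ Q₀ y) (Icc 0 T) := by
  intro t ht
  refine intervalIntegral.integral_congr fun s hs => ?_
  rw [uIcc_of_le ht.1] at hs
  have hs' : EqOn x y (Icc 0 s) := h.mono (Icc_subset_Icc_right (hs.2.trans ht.2))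
  simp only [Fint, Pint_congr hs.1 hs', Qint_congr hs.1 hs', hs' (right_mem_Icc.2 hs.1)]

end Velocity

section Contraction
variable {ℓ k η a₀ C₁ C₂ : ℝ} {ωB ΔW P₀ Q₀ x₁ x₂ : ℝ → ℝ} {D : ℝ}

lemma abs_Fint_sub_le (hℓ : 0 < ℓ) (hk : 0 ≤ k) (hη : 0 < η) (ha₀ : 0 < a₀)
    (hωB : ContDiff ℝ 1 ωB) (hωBper : ωB.Periodic ℓ) (hΔW : ContDiff ℝ 1 ΔW)
    (hP₀ : ContDiff ℝ 1 P₀) (hP₀per : P₀.Periodic ℓ)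
    (hQ₀ : ContDiff ℝ 1 Q₀) (hQ₀per : Q₀.Periodic ℓ)
    (hC₁ : C₁ = 4 * max (derivSupNorm ℓ P₀)
        (max (derivSupNorm ℓ Q₀) (2 / (a₀ * ℓ) * derivSupNorm ℓ ωB)))
    (hC₂ : C₂ = C₁ * ℓ / (2 * η) * derivSupNorm ℓ ΔW + k / η)
    (hx₁ : Continuous x₁) (hx₂ : Continuous x₂) {s : ℝ} (hs : 0 ≤ s)
    (hb : ∀ u ∈ Icc 0 s, |x₁ u - x₂ u| ≤ D) :
    |Fint ℓ k η a₀ ωB ΔW P₀ Q₀ x₁ s - Fint ℓ k η a₀ ωB ΔW P₀ Q₀ x₂ s| ≤ C₂ * D := by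
  have hD : 0 ≤ D := (abs_nonneg _).trans (hb 0 ⟨le_rfl, hs⟩)
  have hΔW' : Continuous (deriv ΔW) := hΔW.continuous_deriv le_rfl
  set g : (ℝ → ℝ) → ℝ → ℝ := fun x ξ => (Pint ℓ a₀ ωB P₀ x ξ s - Qint ℓ a₀ ωB Q₀ x ξ s) * deriv ΔW ξ
  have hg : ∀ x, Continuous x → IntervalIntegrable (g x) volume 0 ℓ := fun x hx =>
    (((continuous_Pint hωB.continuous hP₀.continuous hx).comp (.prodMk_left s)).sub
      ((continuous_Qint hωB.continuous hQ₀.continuous hx).comp (.prodMk_left s))).mul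
      hΔW' |>.intervalIntegrable _ _
  have hFg : ∀ x, Fint ℓ k η a₀ ωB ΔW P₀ Q₀ x s
      = 1 / (2 * η) * (∫ ξ in (0 : ℝ)..ℓ, g x ξ) - k / η * x s := fun _ => rfl
  have hC₁0 : 0 ≤ C₁ :=
    hC₁ ▸ mul_nonneg zero_le_four ((derivSupNorm_nonneg ℓ P₀).trans (le_max_left _ _))
  have hI : |(∫ ξ in (0 : ℝ)..ℓ, g x₁ ξ) - ∫ ξ in (0 : ℝ)..ℓ, g x₂ ξ|
      ≤ C₁ * D * derivSupNorm ℓ ΔW * ℓ := by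
    rw [← intervalIntegral.integral_sub (hg x₁ hx₁) (hg x₂ hx₂), ← Real.norm_eq_abs]
    refine (intervalIntegral.norm_integral_le_of_norm_le_const fun ξ hξ => ?_).trans_eq
      (by rw [sub_zero, abs_of_pos hℓ])
    rw [uIoc_of_le hℓ.le] at hξ
    rw [Real.norm_eq_abs, ← sub_mul, abs_mul]
    exact mul_le_mul (hC₁ ▸ abs_Pint_sub_Qint_sub_le hℓ ha₀ hωB hωBper hP₀ hP₀per hQ₀ hQ₀per
      hx₁ hx₂ hs hb ξ) (abs_le_iSup_Icc hΔW'.continuousOn (Ioc_subset_Icc_self hξ))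
      (abs_nonneg _) (mul_nonneg hC₁0 hD)
  calc |Fint ℓ k η a₀ ωB ΔW P₀ Q₀ x₁ s - Fint ℓ k η a₀ ωB ΔW P₀ Q₀ x₂ s|
      = |1 / (2 * η) * ((∫ ξ in (0 : ℝ)..ℓ, g x₁ ξ) - ∫ ξ in (0 : ℝ)..ℓ, g x₂ ξ)
          - k / η * (x₁ s - x₂ s)| := by rw [hFg, hFg]; ring_nf
    _ ≤ 1 / (2 * η) * |(∫ ξ in (0 : ℝ)..ℓ, g x₁ ξ) - ∫ ξ in (0 : ℝ)..ℓ, g x₂ ξ|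
          + k / η * |x₁ s - x₂ s| := by
      refine (abs_sub _ _).trans_eq ?_
      rw [abs_mul, abs_mul, abs_of_pos (by positivity : 0 < 1 / (2 * η)),
        abs_of_nonneg (by positivity : 0 ≤ k / η)]
    _ ≤ 1 / (2 * η) * (C₁ * D * derivSupNorm ℓ ΔW * ℓ) + k / η * D := by
      gcongr
      exact hb s (right_mem_Icc.2 hs)
    _ = C₂ * D := by rw [hC₂]; ring

lemma abs_psiMap_sub_le (hℓ : 0 < ℓ) (hk : 0 ≤ k) (hη : 0 < η) (ha₀ : 0 < a₀)
    (hωB : ContDiff ℝ 1 ωB) (hωBper : ωB.Periodic ℓ) (hΔW : ContDiff ℝ 1 ΔW)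
    (hP₀ : ContDiff ℝ 1 P₀) (hP₀per : P₀.Periodic ℓ)
    (hQ₀ : ContDiff ℝ 1 Q₀) (hQ₀per : Q₀.Periodic ℓ)
    (hC₁ : C₁ = 4 * max (derivSupNorm ℓ P₀)
        (max (derivSupNorm ℓ Q₀) (2 / (a₀ * ℓ) * derivSupNorm ℓ ωB)))
    (hC₂ : C₂ = C₁ * ℓ / (2 * η) * derivSupNorm ℓ ΔW + k / η)
    (hx₁ : Continuous x₁) (hx₂ : Continuous x₂) {t : ℝ} (ht : 0 ≤ t)
    (hb : ∀ u ∈ Icc 0 t, |x₁ u - x₂ u| ≤ D) :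
    |psiMap ℓ k η a₀ ωB ΔW P₀ Q₀ x₁ t - psiMap ℓ k η a₀ ωB ΔW P₀ Q₀ x₂ t| ≤ C₂ * D * t := by
  have hF : ∀ x, Continuous x → IntervalIntegrable (Fint ℓ k η a₀ ωB ΔW P₀ Q₀ x) volume 0 t :=
    fun x hx => (continuous_Fint hωB.continuous (hΔW.continuous_deriv le_rfl) hP₀.continuous
      hQ₀.continuous hx).intervalIntegrable _ _
  rw [psiMap, psiMap, ← intervalIntegral.integral_sub (hF x₁ hx₁) (hF x₂ hx₂), ← Real.norm_eq_abs]
  refine (intervalIntegral.norm_integral_le_of_norm_le_const fun s hs => ?_).trans_eq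
    (by rw [sub_zero, abs_of_nonneg ht])
  rw [uIoc_of_le ht] at hs
  exact abs_Fint_sub_le hℓ hk hη ha₀ hωB hωBper hΔW hP₀ hP₀per hQ₀ hQ₀per hC₁ hC₂ hx₁ hx₂ hs.1.le
    fun u hu => hb u ⟨hu.1, hu.2.trans hs.2⟩

end Contraction

theorem psi_contraction_general
    (ℓ k η a₀ : ℝ) (hℓ : 0 < ℓ) (hk : 0 < k) (hη : 0 < η) (ha₀ : 0 < a₀)
    (ωB ΔW P₀ Q₀ : ℝ → ℝ)
    (hωB : ContDiff ℝ 1 ωB) (hωBper : Function.Periodic ωB ℓ)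
    (hΔW : ContDiff ℝ 1 ΔW)
    (hP₀ : ContDiff ℝ 1 P₀) (hP₀per : Function.Periodic P₀ ℓ)
    (hQ₀ : ContDiff ℝ 1 Q₀) (hQ₀per : Function.Periodic Q₀ ℓ)
    (C₁ C₂ T : ℝ)
    (hC₁ : C₁ = 4 * max (⨆ ξ : Icc (0 : ℝ) ℓ, |deriv P₀ ξ.1|)
        (max (⨆ ξ : Icc (0 : ℝ) ℓ, |deriv Q₀ ξ.1|)
          ((2 / (a₀ * ℓ)) * ⨆ ξ : Icc (0 : ℝ) ℓ, |deriv ωB ξ.1|)))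
    (hC₂ : C₂ = C₁ * ℓ / (2 * η) * (⨆ ξ : Icc (0 : ℝ) ℓ, |deriv ΔW ξ.1|) + k / η)
    (hT : T = 1 / (2 * C₂)) :
    (∀ x₁ x₂ : ℝ → ℝ, ContinuousOn x₁ (Icc 0 T) → x₁ 0 = 0 →
        ContinuousOn x₂ (Icc 0 T) → x₂ 0 = 0 →
        ∀ t ∈ Icc (0 : ℝ) T,
          |psiMap ℓ k η a₀ ωB ΔW P₀ Q₀ x₁ t - psiMap ℓ k η a₀ ωB ΔW P₀ Q₀ x₂ t|
            ≤ (1 / 2) * ⨆ s : Icc (0 : ℝ) T, |x₁ s.1 - x₂ s.1|) ∧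
    (∃ x : ℝ → ℝ,
      (ContinuousOn x (Icc 0 T) ∧ x 0 = 0 ∧
        ∀ t ∈ Icc (0 : ℝ) T, x t = psiMap ℓ k η a₀ ωB ΔW P₀ Q₀ x t) ∧
      ∀ x' : ℝ → ℝ,
        (ContinuousOn x' (Icc 0 T) ∧ x' 0 = 0 ∧
          ∀ t ∈ Icc (0 : ℝ) T, x' t = psiMap ℓ k η a₀ ωB ΔW P₀ Q₀ x' t) →
        ∀ t ∈ Icc (0 : ℝ) T, x t = x' t) := by
  have hC₂0 : 0 < C₂ := by
    have hC₁0 : 0 ≤ C₁ :=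
      hC₁ ▸ mul_nonneg zero_le_four ((derivSupNorm_nonneg ℓ P₀).trans (le_max_left _ _))
    rw [hC₂]
    have := derivSupNorm_nonneg ℓ ΔW
    positivity
  have hT0 : 0 ≤ T := by rw [hT]; positivity
  have hloc : ∀ x y, EqOn x y (Icc 0 T) → EqOn (psiMap ℓ k η a₀ ωB ΔW P₀ Q₀ x)
      (psiMap ℓ k η a₀ ωB ΔW P₀ Q₀ y) (Icc 0 T) := fun _ _ => psiMap_eqOn
  have hcontr : ContractsOnIcc T (1 / 2) (psiMap ℓ k η a₀ ωB ΔW P₀ Q₀) := by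
    intro x₁ x₂ hx₁ hx₂ D hb t ht
    have hD : 0 ≤ D := (abs_nonneg _).trans (hb 0 ⟨le_rfl, hT0⟩)
    calc _ ≤ C₂ * D * t := abs_psiMap_sub_le hℓ hk.le hη ha₀ hωB hωBper hΔW hP₀ hP₀per hQ₀
          hQ₀per hC₁ hC₂ hx₁ hx₂ ht.1 fun u hu => hb u ⟨hu.1, hu.2.trans ht.2⟩
      _ ≤ C₂ * D * T := by gcongr; exact ht.2
      _ = 1 / 2 * D := by rw [hT]; field_simp
  refine ⟨fun x₁ x₂ hx₁ _ hx₂ _ t ht => abs_sub_le_mul_iSup_Icc_of_local hloc hcontr hx₁ hx₂ ht, ?_⟩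
  obtain ⟨x, hx, hxψ⟩ := exists_fixedPoint_Icc_of_contractsOnIcc hT0 (by norm_num) (fun _ =>
    continuous_psiMap hωB.continuous (hΔW.continuous_deriv le_rfl) hP₀.continuous
      hQ₀.continuous) hcontr
  refine ⟨x, ⟨hx, ?_, hxψ⟩, fun x' ⟨hx', _, hx'ψ⟩ t ht =>
    eqOn_Icc_of_fixedPoint_of_local (by norm_num) hloc hcontr hx hx' hxψ hx'ψ ht⟩
  rw [hxψ 0 ⟨le_rfl, hT0⟩]
  exact intervalIntegral.integral_same

/-- **Contraction property of the Picard map**, with the explicit constants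
`C₁ = 4·max{‖P₀'‖_∞, ‖Q₀'‖_∞, (2/(a₀ℓ))‖ω_B'‖_∞}`,
`C₂ = (C₁ℓ/(2η))‖ΔW'‖_∞ + k/η` and `T = 1/(2 C₂)`; in particular `ψ` has a
unique fixed point among continuous functions on `[0,T]` vanishing at `0`. -/
theorem psi_contraction
    (ℓ k η a₀ : ℝ) (hℓ : 0 < ℓ) (hk : 0 < k) (hη : 0 < η) (ha₀ : 0 < a₀)
    (ωB ΔW P₀ Q₀ : ℝ → ℝ)
    (hωB : ContDiff ℝ 1 ωB) (hωBper : Function.Periodic ωB ℓ)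
    (hΔW : ContDiff ℝ 1 ΔW) (hΔWper : Function.Periodic ΔW ℓ)
    (hP₀ : ContDiff ℝ 1 P₀) (hP₀per : Function.Periodic P₀ ℓ)
    (hQ₀ : ContDiff ℝ 1 Q₀) (hQ₀per : Function.Periodic Q₀ ℓ)
    (C₁ C₂ T : ℝ)
    (hC₁ : C₁ = 4 * max (⨆ ξ : Icc (0 : ℝ) ℓ, |deriv P₀ ξ.1|)
        (max (⨆ ξ : Icc (0 : ℝ) ℓ, |deriv Q₀ ξ.1|)
          ((2 / (a₀ * ℓ)) * ⨆ ξ : Icc (0 : ℝ) ℓ, |deriv ωB ξ.1|)))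
    (hC₂ : C₂ = C₁ * ℓ / (2 * η) * (⨆ ξ : Icc (0 : ℝ) ℓ, |deriv ΔW ξ.1|) + k / η)
    (hT : T = 1 / (2 * C₂)) :
    (∀ x₁ x₂ : ℝ → ℝ, ContinuousOn x₁ (Icc 0 T) → x₁ 0 = 0 →
        ContinuousOn x₂ (Icc 0 T) → x₂ 0 = 0 →
        ∀ t ∈ Icc (0 : ℝ) T,
          |psiMap ℓ k η a₀ ωB ΔW P₀ Q₀ x₁ t - psiMap ℓ k η a₀ ωB ΔW P₀ Q₀ x₂ t|
            ≤ (1 / 2) * ⨆ s : Icc (0 : ℝ) T, |x₁ s.1 - x₂ s.1|) ∧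
    (∃ x : ℝ → ℝ,
      (ContinuousOn x (Icc 0 T) ∧ x 0 = 0 ∧
        ∀ t ∈ Icc (0 : ℝ) T, x t = psiMap ℓ k η a₀ ωB ΔW P₀ Q₀ x t) ∧
      ∀ x' : ℝ → ℝ,
        (ContinuousOn x' (Icc 0 T) ∧ x' 0 = 0 ∧
          ∀ t ∈ Icc (0 : ℝ) T, x' t = psiMap ℓ k η a₀ ωB ΔW P₀ Q₀ x' t) →
        ∀ t ∈ Icc (0 : ℝ) T, x t = x' t) :=
  psi_contraction_general ℓ k η a₀ hℓ hk hη ha₀ ωB ΔW P₀ Q₀ hωB hωBper hΔW hP₀ hP₀per hQ₀ hQ₀per C₁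
    C₂ T hC₁ hC₂ hT
end

section
/- Explicit solution and asymptotic periodicity of the inhomogeneous part: let a₀ > 0, T > 0, and let v̄ : ℝ → ℝ be continuous and T-periodic. Define z̃(t) = ∫₀ᵗ exp(−∫ᵤᵗ (a₀ − i v̄(s)) ds) du for t ≥ 0. Then |z̃(t+T) − z̃(t)| ≤ e^{−a₀t}(1 − e^{−a₀T})/a₀ for all t ≥ 0; in particular z̃(t+T) − z̃(t) → 0 as t → ∞. -/
/-!
Substituting `u ↦ u + T` in `z̃(t + T)` and using the periodicity of `v̄`, the difference
`z̃(t + T) − z̃(t)` is the integral over `u ∈ [−T, 0]` of `exp (−∫ᵤᵗ (a₀ − i v̄))`. The imaginary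
part of the exponent only rotates, so this integrand has modulus `e^{−a₀ (t − u)}`, and
integrating that over `[−T, 0]` gives the bound.
-/

open Real Set Filter MeasureTheory

section

variable {E : Type*} [NormedAddCommGroup E] [NormedSpace ℝ E]

theorem Function.Periodic.intervalIntegral_add_period {g : ℝ → E} {T : ℝ}
    (hg : Function.Periodic g T) (u t : ℝ) :
    ∫ s in u + T..t + T, g s = ∫ s in u..t, g s := by
  rw [← intervalIntegral.integral_comp_add_right]
  exact intervalIntegral.integral_congr fun s _ => hg s

theorem intervalIntegral_add_period_sub (K : ℝ → ℝ → E) {T t : ℝ}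
    (hK : ∀ u, K (u + T) (t + T) = K u t)
    (hneg : IntervalIntegrable (K · t) volume (-T) 0)
    (hpos : IntervalIntegrable (K · t) volume 0 t) :
    (∫ u in 0..t + T, K u (t + T)) - ∫ u in 0..t, K u t = ∫ u in -T..0, K u t := by
  have hshift : ∫ u in 0..t + T, K u (t + T) = ∫ u in -T..t, K u t := by
    simpa [hK] using
      (intervalIntegral.integral_comp_add_right (K · (t + T)) T (a := -T) (b := t)).symm
  rw [hshift, ← intervalIntegral.integral_add_adjacent_intervals hneg hpos, add_sub_cancel_right]

end

theorem continuous_cexp_neg_intervalIntegral {g : ℝ → ℂ} (hg : Continuous g) (t : ℝ) :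
    Continuous fun u => Complex.exp (-∫ s in u..t, g s) := by
  have hprim := intervalIntegral.continuous_primitive (μ := volume) (hg.intervalIntegrable · ·) t
  simp_rw [intervalIntegral.integral_symm t, neg_neg]
  exact Complex.continuous_exp.comp hprim

theorem norm_cexp_neg_intervalIntegral {g : ℝ → ℂ} {u t : ℝ}
    (hg : IntervalIntegrable g volume u t) :
    ‖Complex.exp (-∫ s in u..t, g s)‖ = Real.exp (-∫ s in u..t, (g s).re) := by
  rw [Complex.norm_exp, Complex.neg_re, ← RCLike.re_to_complex,
    ← intervalIntegral.intervalIntegral_re hg]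
  rfl

theorem integral_exp_neg_sub_mul {a : ℝ} (ha : a ≠ 0) (T t : ℝ) :
    ∫ u in -T..0, Real.exp (-((t - u) * a)) = Real.exp (-a * t) * (1 - Real.exp (-a * T)) / a := by
  have hsplit : ∀ u, Real.exp (-((t - u) * a)) = Real.exp (-a * t) * Real.exp (a * u) := by
    intro u; rw [← Real.exp_add]; ring_nf
  simp_rw [hsplit]
  rw [intervalIntegral.integral_const_mul, intervalIntegral.integral_comp_mul_left _ ha, integral_exp]
  simp [field]

theorem norm_integral_cexp_neg_integral_add_period_sub_le {g : ℝ → ℂ} {a T : ℝ}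
    (hg : Continuous g) (hper : Function.Periodic g T) (hre : ∀ s, (g s).re = a) (ha : a ≠ 0)
    (hT : 0 ≤ T) (t : ℝ) :
    ‖(∫ u in 0..t + T, Complex.exp (-∫ s in u..t + T, g s)) -
        ∫ u in 0..t, Complex.exp (-∫ s in u..t, g s)‖ ≤
      Real.exp (-a * t) * (1 - Real.exp (-a * T)) / a := by
  have hcont := continuous_cexp_neg_intervalIntegral hg t
  rw [intervalIntegral_add_period_sub (fun u t => Complex.exp (-∫ s in u..t, g s))
    (fun u => by rw [hper.intervalIntegral_add_period]) (hcont.intervalIntegrable _ _)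
    (hcont.intervalIntegrable _ _)]
  have hnorm : ∀ u, ‖Complex.exp (-∫ s in u..t, g s)‖ = Real.exp (-((t - u) * a)) := by
    intro u
    simp [norm_cexp_neg_intervalIntegral (hg.intervalIntegrable u t), hre]
  calc _ ≤ ∫ u in -T..0, Real.exp (-((t - u) * a)) :=
        intervalIntegral.norm_integral_le_of_norm_le (by linarith)
          (ae_of_all _ fun u _ => (hnorm u).le)
          ((by fun_prop : Continuous fun u => Real.exp (-((t - u) * a))).intervalIntegrable _ _)
    _ = _ := integral_exp_neg_sub_mul ha T t

/-- **Asymptotic periodicity of the inhomogeneous part**: with `a₀ > 0`, `T > 0`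
and `v̄` continuous and `T`-periodic, the function
`z̃(t) = ∫₀ᵗ exp(−∫ᵤᵗ (a₀ − i v̄(s)) ds) du` satisfies
`|z̃(t+T) − z̃(t)| ≤ e^{−a₀t}(1 − e^{−a₀T})/a₀`; in particular
`z̃(t+T) − z̃(t) → 0` as `t → ∞`. -/
theorem inhomogeneous_part_asymptotically_periodic
    (a₀ T : ℝ) (ha₀ : 0 < a₀) (hT : 0 < T)
    (vbar : ℝ → ℝ) (hvbar : Continuous vbar) (hvper : Function.Periodic vbar T)
    (ztil : ℝ → ℂ)
    (hztil : ∀ t : ℝ, ztil t =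
      ∫ u in (0 : ℝ)..t,
        Complex.exp (-(∫ s in u..t, ((a₀ : ℂ) - Complex.I * (vbar s : ℂ))))) :
    (∀ t ∈ Ici (0 : ℝ),
      ‖ztil (t + T) - ztil t‖
        ≤ Real.exp (-a₀ * t) * (1 - Real.exp (-a₀ * T)) / a₀) ∧
    Tendsto (fun t => ztil (t + T) - ztil t) atTop (nhds 0) := by
  obtain rfl : ztil = _ := funext hztil
  have hbound := norm_integral_cexp_neg_integral_add_period_sub_le
    (g := fun s => (a₀ : ℂ) - Complex.I * (vbar s : ℂ)) (by fun_prop)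
    (fun s => by simp only [hvper s]) (fun s => by simp) ha₀.ne' hT.le
  refine ⟨fun t _ => hbound t, squeeze_zero_norm hbound ?_⟩
  have hdecay : Tendsto (fun t => Real.exp (-a₀ * t)) atTop (nhds 0) :=
    tendsto_exp_atBot.comp (tendsto_id.const_mul_atTop_of_neg (neg_neg_of_pos ha₀))
  simpa using (hdecay.mul_const (1 - Real.exp (-a₀ * T))).div_const a₀
end

section
/- Higher-order Fourier coefficients (Proposition on higher order coefficients): let a₀ > 0, T > 0, c ∈ ℂ, and let v̄ : ℝ → ℝ be continuous and T-periodic. Then there exists a differentiable T-periodic function z_p : ℝ → ℂ satisfying z_p'(t) = −(a₀ − i v̄(t)) z_p(t) + c for all t, such that every differentiable z : [0,∞) → ℂ satisfying z'(t) = −(a₀ − i v̄(t)) z(t) + c converges to it: z(t) − z_p(t) → 0 as t → ∞. In the special case c = 0 one can take z_p ≡ 0, i.e. every solution tends to 0. -/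
open Real Set Filter

/-!
With `a t = a₀ - i v̄(t)` and the integrating factor `μ t = exp (∫₀ᵗ a)`, the equation
`z' = -a z + c` becomes `(μ z)' = c μ`, so its solutions are `(z₀ + c ∫₀ᵗ μ) / μ t`.
Periodicity of `a` gives `μ (t + T) = μ T · μ t`, and the solution is `T`-periodic exactly for
the initial value `z₀` that solves `z₀ + c ∫₀ᵀ μ = μ T · z₀`; this is possible because
`|μ T| = exp (a₀ T) > 1`. The difference of two solutions is a constant multiple of `1 / μ`,
which decays like `exp (-a₀ t)`.
-/

noncomputable section

def integratingFactor (a : ℝ → ℂ) (t : ℝ) : ℂ :=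
  Complex.exp (∫ s in (0 : ℝ)..t, a s)

def variationOfConstants (a : ℝ → ℂ) (c z₀ : ℂ) (t : ℝ) : ℂ :=
  (z₀ + c * ∫ s in (0 : ℝ)..t, integratingFactor a s) / integratingFactor a t

def periodicSolution (a : ℝ → ℂ) (T : ℝ) (c : ℂ) : ℝ → ℂ :=
  variationOfConstants a c
    (c * (∫ s in (0 : ℝ)..T, integratingFactor a s) / (integratingFactor a T - 1))

section

variable {a : ℝ → ℂ} {T : ℝ}

theorem integratingFactor_ne_zero (a : ℝ → ℂ) (t : ℝ) : integratingFactor a t ≠ 0 :=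
  Complex.exp_ne_zero _

theorem integratingFactor_zero (a : ℝ → ℂ) : integratingFactor a 0 = 1 := by
  simp [integratingFactor]

theorem hasDerivAt_integratingFactor (ha : Continuous a) (t : ℝ) :
    HasDerivAt (integratingFactor a) (a t * integratingFactor a t) t :=
  (ha.integral_hasStrictDerivAt 0 t).hasDerivAt.cexp.congr_deriv (mul_comm _ _)

theorem continuous_integratingFactor (ha : Continuous a) : Continuous (integratingFactor a) :=
  continuous_iff_continuousAt.2 fun t => (hasDerivAt_integratingFactor ha t).continuousAt

theorem norm_integratingFactor (ha : Continuous a) (t : ℝ) :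
    ‖integratingFactor a t‖ = Real.exp (∫ s in (0 : ℝ)..t, (a s).re) := by
  rw [integratingFactor, Complex.norm_exp]
  exact congrArg Real.exp (intervalIntegral.intervalIntegral_re (ha.intervalIntegrable 0 t)).symm

theorem integratingFactor_add_period (ha : Continuous a) (hper : Function.Periodic a T)
    (t : ℝ) : integratingFactor a (t + T) = integratingFactor a T * integratingFactor a t := by
  rw [integratingFactor, hper.intervalIntegral_add_eq_add 0 t fun _ _ => ha.intervalIntegrable _ _,
    zero_add, Complex.exp_add, mul_comm]
  rfl

theorem integral_integratingFactor_add_period (ha : Continuous a) (hper : Function.Periodic a T)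
    (t : ℝ) :
    ∫ s in (0 : ℝ)..t + T, integratingFactor a s =
      (∫ s in (0 : ℝ)..T, integratingFactor a s) +
        integratingFactor a T * ∫ s in (0 : ℝ)..t, integratingFactor a s := by
  have hμ := continuous_integratingFactor ha
  have hshift : ∫ s in (0 : ℝ)..t, integratingFactor a (s + T) =
      ∫ s in T..t + T, integratingFactor a s := by
    simpa only [zero_add] using
      intervalIntegral.integral_comp_add_right (integratingFactor a) T (a := 0) (b := t)
  rw [← intervalIntegral.integral_add_adjacent_intervals (hμ.intervalIntegrable 0 T)
    (hμ.intervalIntegrable T (t + T)), ← hshift, ← intervalIntegral.integral_const_mul]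
  simp only [integratingFactor_add_period ha hper]

theorem hasDerivAt_variationOfConstants (ha : Continuous a) (c z₀ : ℂ) (t : ℝ) :
    HasDerivAt (variationOfConstants a c z₀)
      (-a t * variationOfConstants a c z₀ t + c) t := by
  have hμ := continuous_integratingFactor ha
  have hnum : HasDerivAt (fun t => z₀ + c * ∫ s in (0 : ℝ)..t, integratingFactor a s)
      (c * integratingFactor a t) t :=
    ((hμ.integral_hasStrictDerivAt 0 t).hasDerivAt.const_mul c).const_add z₀
  refine (hnum.div (hasDerivAt_integratingFactor ha t) (integratingFactor_ne_zero a t)).congr_deriv ?_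
  have := integratingFactor_ne_zero a t
  simp only [variationOfConstants]
  field_simp
  ring

theorem periodicSolution_add_period (ha : Continuous a) (hper : Function.Periodic a T)
    (hμT : integratingFactor a T ≠ 1) (c : ℂ) (t : ℝ) :
    periodicSolution a T c (t + T) = periodicSolution a T c t := by
  set J := ∫ s in (0 : ℝ)..T, integratingFactor a s
  have hμT' : integratingFactor a T - 1 ≠ 0 := sub_ne_zero.2 hμT
  have hz₀ : c * J / (integratingFactor a T - 1) + c * J =
      integratingFactor a T * (c * J / (integratingFactor a T - 1)) := by
    field_simp
    ring
  simp only [periodicSolution, variationOfConstants]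
  rw [integratingFactor_add_period ha hper, integral_integratingFactor_add_period ha hper,
    ← mul_div_mul_left _ (integratingFactor a t) (integratingFactor_ne_zero a T)]
  congr 1
  linear_combination hz₀

theorem periodicSolution_zero (a : ℝ → ℂ) (T : ℝ) : periodicSolution a T 0 = 0 := by
  ext t
  simp [periodicSolution, variationOfConstants]

theorem sub_eq_div_integratingFactor (ha : Continuous a) {c : ℂ} {z y : ℝ → ℂ}
    (hz : ∀ t ∈ Ici (0 : ℝ), HasDerivWithinAt z (-a t * z t + c) (Ici 0) t)
    (hy : ∀ t ∈ Ici (0 : ℝ), HasDerivWithinAt y (-a t * y t + c) (Ici 0) t) :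
    ∀ t ∈ Ici (0 : ℝ), z t - y t = (z 0 - y 0) / integratingFactor a t := by
  set w : ℝ → ℂ := fun t => integratingFactor a t * (z t - y t)
  have hw : ∀ t ∈ Ici (0 : ℝ), HasDerivWithinAt w 0 (Ici 0) t := fun t ht =>
    ((hasDerivAt_integratingFactor ha t).hasDerivWithinAt.mul ((hz t ht).sub (hy t ht))).congr_deriv
      (by simp only [Pi.sub_apply]; ring)
  intro t ht
  have hconst : w t = w 0 :=
    constant_of_has_deriv_right_zero
      (fun x hx => ((hw x (Icc_subset_Ici_self hx)).continuousWithinAt).mono Icc_subset_Ici_self)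
      (fun x hx => (hw x hx.1).mono (Ici_subset_Ici.2 hx.1)) t ⟨ht, le_rfl⟩
  simp only [w, integratingFactor_zero, one_mul] at hconst
  rw [eq_div_iff (integratingFactor_ne_zero a t), mul_comm, hconst]

theorem tendsto_sub_of_tendsto_norm_integratingFactor (ha : Continuous a)
    (hμ : Tendsto (fun t => ‖integratingFactor a t‖) atTop atTop) {c : ℂ} {z y : ℝ → ℂ}
    (hz : ∀ t ∈ Ici (0 : ℝ), HasDerivWithinAt z (-a t * z t + c) (Ici 0) t)
    (hy : ∀ t ∈ Ici (0 : ℝ), HasDerivWithinAt y (-a t * y t + c) (Ici 0) t) :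
    Tendsto (fun t => z t - y t) atTop (nhds 0) := by
  rw [tendsto_zero_iff_norm_tendsto_zero]
  refine ((tendsto_const_nhds (x := ‖z 0 - y 0‖)).div_atTop hμ).congr' ?_
  filter_upwards [eventually_ge_atTop 0] with t ht
  rw [sub_eq_div_integratingFactor ha hz hy t ht, norm_div]

end

/-- **Higher-order Fourier coefficients**: for `a₀ > 0`, `T > 0`, `c ∈ ℂ` and `v̄`
continuous and `T`-periodic, there is a differentiable `T`-periodic solution `z_p`
of `z' = −(a₀ − i v̄(t)) z + c` to which every solution on `[0,∞)` converges;
when `c = 0` one can take `z_p ≡ 0`, i.e. every solution tends to `0`. -/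
theorem higher_order_coefficients_asymptotics
    (a₀ T : ℝ) (ha₀ : 0 < a₀) (hT : 0 < T) (c : ℂ)
    (vbar : ℝ → ℝ) (hvbar : Continuous vbar) (hvper : Function.Periodic vbar T) :
    ∃ zp : ℝ → ℂ,
      (∀ t : ℝ,
        HasDerivAt zp (-((a₀ : ℂ) - Complex.I * (vbar t : ℂ)) * zp t + c) t) ∧
      (∀ t : ℝ, zp (t + T) = zp t) ∧
      (∀ z : ℝ → ℂ,
        (∀ t ∈ Ici (0 : ℝ),
          HasDerivWithinAt z (-((a₀ : ℂ) - Complex.I * (vbar t : ℂ)) * z t + c)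
            (Ici 0) t) →
        Tendsto (fun t => z t - zp t) atTop (nhds 0)) ∧
      (c = 0 → ∀ t : ℝ, zp t = 0) := by
  set a : ℝ → ℂ := fun t => (a₀ : ℂ) - Complex.I * (vbar t : ℂ)
  have ha : Continuous a := by fun_prop
  have hper : Function.Periodic a T := fun t => by simp only [a, hvper t]
  have hnorm : ∀ t, ‖integratingFactor a t‖ = Real.exp (a₀ * t) := fun t => by
    simp [norm_integratingFactor ha, a, mul_comm]
  have hμT : integratingFactor a T ≠ 1 := fun h => by
    have := hnorm T
    rw [h, norm_one, eq_comm, Real.exp_eq_one_iff] at this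
    exact (mul_pos ha₀ hT).ne' this
  have hμ : Tendsto (fun t => ‖integratingFactor a t‖) atTop atTop := by
    simp only [hnorm]
    exact tendsto_exp_atTop.comp (tendsto_id.const_mul_atTop ha₀)
  refine ⟨periodicSolution a T c, hasDerivAt_variationOfConstants ha c _,
    periodicSolution_add_period ha hper hμT c, fun z hz => ?_, ?_⟩
  · exact tendsto_sub_of_tendsto_norm_integratingFactor ha hμ hz
      fun t _ => (hasDerivAt_variationOfConstants ha c _ t).hasDerivWithinAt
  · rintro rfl t
    rw [periodicSolution_zero]
    rfl
end
end
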